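/- arXiv:2112.08398 — 2 statements merged into one kernel-verified Lean document; each statement's English description precedes it below -/
import Mathlib

section
/- Define the following elementary moves on pairs of integers: (p, q) ↦ (p, q + 2p), (p, q) ↦ (p, q − 2p), (p, q) ↦ (p + 2q, q), (p, q) ↦ (p − 2q, q), and (p, q) ↦ (−p, −q). Then for every pair of coprime integers (p, q), the reflexive-transitive closure of these moves connects (p, q) to at least one of the four pairs (1, 0), (0, 1), (1, 1), (1, −1). -/
/-- An elementary "belt-trick" move on pairs of integers. -/
def BeltMove (a b : ℤ × ℤ) : Prop :=
  b = (a.1, a.2 + 2 * a.1) ∨ b = (a.1, a.2 - 2 * a.1) ∨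
  b = (a.1 + 2 * a.2, a.2) ∨ b = (a.1 - 2 * a.2, a.2) ∨ b = (-a.1, -a.2)

/-!
Each move preserves `gcd p q`, and whenever `p, q` are both nonzero with `|p| ≠ |q|`, one of
the four shears strictly decreases `|p| + |q|`: if `0 < |p| < |q|`, then `q - 2p` or `q + 2p`
(whichever moves `q` towards `0`) has absolute value `< |q|`, and symmetrically. Descending
until a coordinate vanishes or `|p| = |q|`, coprimality leaves only `(±1, 0)`, `(0, ±1)` and
`(±1, ±1)`, which are the four targets up to the move `(p, q) ↦ (-p, -q)`.
-/

def beltTargets : Set (ℤ × ℤ) := {(1, 0), (0, 1), (1, 1), (1, -1)}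

namespace BeltMove

lemma neg (a : ℤ × ℤ) : BeltMove a (-a.1, -a.2) :=
  .inr <| .inr <| .inr <| .inr rfl

lemma gcd_eq {a b : ℤ × ℤ} (hab : BeltMove a b) : Int.gcd b.1 b.2 = Int.gcd a.1 a.2 := by
  rcases hab with rfl | rfl | rfl | rfl | rfl
  · exact Int.gcd_add_mul_right_right _ _ _
  · exact Int.gcd_sub_mul_right_right _ _ _
  · exact Int.gcd_add_mul_right_left _ _ _
  · exact Int.gcd_sub_mul_right_left _ _ _
  · simp only [Int.neg_gcd, Int.gcd_neg]

lemma exists_natAbs_add_lt {p q : ℤ} (hp : p ≠ 0) (hq : q ≠ 0) (hpq : p.natAbs ≠ q.natAbs) :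
    ∃ b, BeltMove (p, q) b ∧ b.1.natAbs + b.2.natAbs < p.natAbs + q.natAbs := by
  rcases Nat.lt_or_gt_of_ne hpq with hlt | hlt
  · rcases (by omega : (q + 2 * p).natAbs < q.natAbs ∨ (q - 2 * p).natAbs < q.natAbs) with h | h
    · exact ⟨_, .inl rfl, by simpa using h⟩
    · exact ⟨_, .inr <| .inl rfl, by simpa using h⟩
  · rcases (by omega : (p + 2 * q).natAbs < p.natAbs ∨ (p - 2 * q).natAbs < p.natAbs) with h | h
    · exact ⟨_, .inr <| .inr <| .inl rfl, by simpa using h⟩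
    · exact ⟨_, .inr <| .inr <| .inr <| .inl rfl, by simpa using h⟩

end BeltMove

lemma mem_beltTargets_or_neg_mem {p q : ℤ} (h : Int.gcd p q = 1)
    (hdeg : p = 0 ∨ q = 0 ∨ p.natAbs = q.natAbs) :
    (p, q) ∈ beltTargets ∨ (-p, -q) ∈ beltTargets := by
  have hbound : p.natAbs ≤ 1 ∧ q.natAbs ≤ 1 := by
    rcases hdeg with rfl | rfl | hpq
    · simp_all
    · simp_all
    · rw [Int.gcd_eq_natAbs_gcd_natAbs, hpq, Nat.gcd_self] at h
      omega
  obtain ⟨hp₁, hp₂⟩ : -1 ≤ p ∧ p ≤ 1 := by omega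
  obtain ⟨hq₁, hq₂⟩ : -1 ≤ q ∧ q ≤ 1 := by omega
  interval_cases p <;> interval_cases q <;> simp_all [beltTargets]

theorem exists_reflTransGen_beltMove_mem_beltTargets (a : ℤ × ℤ) (ha : Int.gcd a.1 a.2 = 1) :
    ∃ t ∈ beltTargets, Relation.ReflTransGen BeltMove a t := by
  by_cases hdeg : a.1 = 0 ∨ a.2 = 0 ∨ a.1.natAbs = a.2.natAbs
  · rcases mem_beltTargets_or_neg_mem ha hdeg with h | h
    · exact ⟨a, h, .refl⟩
    · exact ⟨_, h, .single (BeltMove.neg a)⟩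
  · push Not at hdeg
    obtain ⟨b, hab, _⟩ := BeltMove.exists_natAbs_add_lt hdeg.1 hdeg.2.1 hdeg.2.2
    obtain ⟨t, ht, hbt⟩ := exists_reflTransGen_beltMove_mem_beltTargets b (hab.gcd_eq.trans ha)
    exact ⟨t, ht, hbt.head hab⟩
termination_by a.1.natAbs + a.2.natAbs

theorem stmt5 (p q : ℤ) (h : Int.gcd p q = 1) :
    Relation.ReflTransGen BeltMove (p, q) (1, 0) ∨
    Relation.ReflTransGen BeltMove (p, q) (0, 1) ∨
    Relation.ReflTransGen BeltMove (p, q) (1, 1) ∨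
    Relation.ReflTransGen BeltMove (p, q) (1, -1) := by
  obtain ⟨t, ht, hpt⟩ := exists_reflTransGen_beltMove_mem_beltTargets (p, q) h
  rcases ht with rfl | rfl | rfl | rfl
  exacts [.inl hpt, .inr <| .inl hpt, .inr <| .inr <| .inl hpt, .inr <| .inr <| .inr hpt]
end

section
/- Let A, B, C be finite types with A, B nonempty, let α : A → C and β : B → C be maps, and let d : A → ℝ, e : B → ℝ, f : C → ℝ be strictly positive functions. Assume there exist μ₀ ∈ A, ν₀ ∈ B with α(μ₀) = β(ν₀). Call a pair (p, q) of probability vectors, p on A and q on B, feasible if they have equal pushforwards: for every k ∈ C, ∑_{μ : α(μ)=k} p(μ) = ∑_{ν : β(ν)=k} q(ν) =: r(k). For feasible (p, q) define Φ(p, q) = ∑_{μ∈A} p(μ)·( log d(μ)² − log p(μ) ) + ∑_{ν∈B} q(ν)·( log e(ν)² − log q(ν) ) − ∑_{k∈C} r(k)·( log f(k)² − log r(k) ), where any term with zero coefficient is 0. Then the maximum of Φ over all feasible pairs is attained and equals log( ∑_{(μ,ν) : α(μ)=β(ν)} d(μ)² · e(ν)² / f(α(μ))² ). -/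
/-!
Given feasible `p, q` with common pushforward `r`, the coupling `m(μ, ν) = p μ q ν / r(α μ)` on
the fibre product `{α μ = β ν}` has marginals `p` and `q`, and a term-by-term expansion of
`log m` rewrites the objective as `∑ m (log a - log m)` with `a = d² e² / f²`. Gibbs' inequality
bounds this by `log ∑ a`, with equality for `m = a / ∑ a`; since `a` has product form on each
fibre, `a / ∑ a` is itself the coupling of its own marginals, so the bound is attained.
-/

open Finset Real

lemma mul_log_sub_log_le {w a S : ℝ} (hw : 0 ≤ w) (ha : 0 < a) (hS : 0 < S) :
    w * (log a - log w) ≤ w * log S + (a / S - w) := by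
  rcases hw.eq_or_lt with rfl | hw
  · simp only [zero_mul, sub_zero, zero_add]; positivity
  have hlog : log a - log w = log (a / (w * S)) + log S := by
    rw [log_div ha.ne' (by positivity), log_mul hw.ne' hS.ne']; ring
  calc w * (log a - log w) = w * log (a / (w * S)) + w * log S := by rw [hlog, mul_add]
    _ ≤ w * (a / (w * S) - 1) + w * log S := by
        gcongr; exact log_le_sub_one_of_pos (by positivity)
    _ = w * log S + (a / S - w) := by field_simp; ring

theorem sum_mul_log_sub_log_le_log_sum {ι : Type*} (s : Finset ι) {w a : ι → ℝ}
    (hw : ∀ i ∈ s, 0 ≤ w i) (hw1 : ∑ i ∈ s, w i = 1) (ha : ∀ i ∈ s, 0 < a i) :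
    ∑ i ∈ s, w i * (log (a i) - log (w i)) ≤ log (∑ i ∈ s, a i) := by
  have hs : s.Nonempty := nonempty_of_sum_ne_zero (hw1.symm ▸ one_ne_zero)
  have hS : 0 < ∑ i ∈ s, a i := sum_pos ha hs
  calc ∑ i ∈ s, w i * (log (a i) - log (w i))
      ≤ ∑ i ∈ s, (w i * log (∑ j ∈ s, a j) + (a i / ∑ j ∈ s, a j - w i)) :=
        sum_le_sum fun i hi => mul_log_sub_log_le (hw i hi) (ha i hi) hS
    _ = log (∑ i ∈ s, a i) := by
        rw [sum_add_distrib, ← sum_mul, sum_sub_distrib, ← sum_div, hw1, div_self hS.ne']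
        ring

theorem sum_div_mul_log_sub_log_div {ι : Type*} (s : Finset ι) {a : ι → ℝ}
    (ha : ∀ i ∈ s, a i ≠ 0) :
    ∑ i ∈ s, a i / (∑ j ∈ s, a j) * (log (a i) - log (a i / ∑ j ∈ s, a j))
      = log (∑ j ∈ s, a j) := by
  rcases eq_or_ne (∑ j ∈ s, a j) 0 with hZ | hZ
  · simp [hZ]
  calc ∑ i ∈ s, a i / (∑ j ∈ s, a j) * (log (a i) - log (a i / ∑ j ∈ s, a j))
      = ∑ i ∈ s, a i / (∑ j ∈ s, a j) * log (∑ j ∈ s, a j) :=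
        sum_congr rfl fun i hi => by rw [log_div (ha i hi) hZ, sub_sub_cancel]
    _ = log (∑ j ∈ s, a j) := by rw [← sum_mul, ← sum_div, div_self hZ, one_mul]

lemma mul_log_mul_div_sub_log_mul_div {D E F p q r : ℝ} (hD : D ≠ 0) (hE : E ≠ 0) (hF : F ≠ 0) :
    p * q / r * (log (D * E / F) - log (p * q / r))
      = p * q / r * ((log D - log p) + (log E - log q) - (log F - log r)) := by
  rcases eq_or_ne (p * q / r) 0 with h | h
  · rw [h, zero_mul, zero_mul]
  obtain ⟨⟨hp, hq⟩, hr⟩ : (p ≠ 0 ∧ q ≠ 0) ∧ r ≠ 0 := by simpa [not_or] using h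
  rw [log_div (mul_ne_zero hD hE) hF, log_mul hD hE, log_div (mul_ne_zero hp hq) hr, log_mul hp hq]
  ring

noncomputable section

variable {A B C : Type*} [Fintype A] [DecidableEq C] (α : A → C) (β : B → C)

def fiberSum (p : A → ℝ) (k : C) : ℝ :=
  ∑ μ ∈ univ.filter fun μ => α μ = k, p μ

/-- The coupling of `p` and `q` that is conditionally independent over their common pushforward
to `C`; where that pushforward vanishes, division by zero makes it `0`. -/
def coupling (p : A → ℝ) (q : B → ℝ) (x : A × B) : ℝ :=
  p x.1 * q x.2 / fiberSum α p (α x.1)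

lemma fiberSum_mul_comp (p : A → ℝ) (g : C → ℝ) (k : C) :
    fiberSum α (fun μ => p μ * g (α μ)) k = fiberSum α p k * g k := by
  rw [fiberSum, fiberSum, sum_mul]
  exact sum_congr rfl fun μ hμ => by rw [(mem_filter.1 hμ).2]

lemma sum_fiberSum [Fintype C] (p : A → ℝ) : ∑ k, fiberSum α p k = ∑ μ, p μ :=
  sum_fiberwise univ α p

lemma sum_fiberSum_mul [Fintype C] (p : A → ℝ) (g : C → ℝ) :
    ∑ k, fiberSum α p k * g k = ∑ μ, p μ * g (α μ) := by
  simp_rw [← fiberSum_mul_comp, sum_fiberSum]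

variable {α} {p : A → ℝ}

lemma fiberSum_nonneg (hp : ∀ μ, 0 ≤ p μ) (k : C) : 0 ≤ fiberSum α p k :=
  sum_nonneg fun μ _ => hp μ

lemma le_fiberSum_self (hp : ∀ μ, 0 ≤ p μ) (μ : A) : p μ ≤ fiberSum α p (α μ) :=
  single_le_sum (fun μ _ => hp μ) (by simp)

lemma eq_zero_of_fiberSum_eq_zero (hp : ∀ μ, 0 ≤ p μ) {μ : A} (h : fiberSum α p (α μ) = 0) :
    p μ = 0 :=
  le_antisymm (h ▸ le_fiberSum_self hp μ) (hp μ)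

lemma fiberSum_pos (hp : ∀ μ, 0 < p μ) (μ : A) : 0 < fiberSum α p (α μ) :=
  (hp μ).trans_le (le_fiberSum_self (fun μ => (hp μ).le) μ)

lemma coupling_nonneg {q : B → ℝ} (hp : ∀ μ, 0 ≤ p μ) (hq : ∀ ν, 0 ≤ q ν) (x : A × B) :
    0 ≤ coupling α p q x :=
  div_nonneg (mul_nonneg (hp _) (hq _)) (fiberSum_nonneg hp _)

variable (α)

variable [Fintype B]

def fiberProd : Finset (A × B) :=
  univ.filter fun x => α x.1 = β x.2

def FeasiblePair (p : A → ℝ) (q : B → ℝ) : Prop :=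
  (∀ μ, 0 ≤ p μ) ∧ (∑ μ, p μ = 1) ∧ (∀ ν, 0 ≤ q ν) ∧ (∑ ν, q ν = 1) ∧
    ∀ k, fiberSum α p k = fiberSum β q k

def fluxObjective [Fintype C] (D : A → ℝ) (E : B → ℝ) (F : C → ℝ) (p : A → ℝ) (q : B → ℝ) : ℝ :=
  ∑ μ, p μ * (log (D μ) - log (p μ)) + ∑ ν, q ν * (log (E ν) - log (q ν))
    - ∑ k, fiberSum α p k * (log (F k) - log (fiberSum α p k))

lemma sum_fiberProd_eq_sum_left (F : A × B → ℝ) :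
    ∑ x ∈ fiberProd α β, F x = ∑ μ, ∑ ν ∈ univ.filter fun ν => β ν = α μ, F (μ, ν) := by
  rw [fiberProd, sum_filter, Fintype.sum_prod_type]
  exact sum_congr rfl fun μ _ => by rw [sum_filter]; simp only [eq_comm]

lemma sum_fiberProd_eq_sum_right (F : A × B → ℝ) :
    ∑ x ∈ fiberProd α β, F x = ∑ ν, ∑ μ ∈ univ.filter fun μ => α μ = β ν, F (μ, ν) := by
  rw [fiberProd, sum_filter, Fintype.sum_prod_type_right]
  exact sum_congr rfl fun ν _ => by rw [sum_filter]

lemma sum_fiberProd_mul_div [Fintype C] (D : A → ℝ) (E : B → ℝ) (F : C → ℝ) :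
    ∑ x ∈ fiberProd α β, D x.1 * E x.2 / F (α x.1)
      = ∑ k, fiberSum α D k * (fiberSum β E k / F k) := by
  rw [sum_fiberProd_eq_sum_left, sum_fiberSum_mul]
  refine sum_congr rfl fun μ _ => ?_
  rw [fiberSum, sum_div, mul_sum]
  exact sum_congr rfl fun ν _ => by ring

variable {α β} {q : B → ℝ}

lemma sum_coupling_fiber_left (hp : ∀ μ, 0 ≤ p μ) (hpq : ∀ k, fiberSum α p k = fiberSum β q k)
    (μ : A) : ∑ ν ∈ univ.filter fun ν => β ν = α μ, coupling α p q (μ, ν) = p μ := by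
  simp only [coupling]
  rw [← sum_div, ← mul_sum]
  change p μ * fiberSum β q (α μ) / _ = _
  rw [← hpq]
  exact mul_div_cancel_of_imp (eq_zero_of_fiberSum_eq_zero hp)

lemma sum_coupling_fiber_right (hq : ∀ ν, 0 ≤ q ν) (hpq : ∀ k, fiberSum α p k = fiberSum β q k)
    (ν : B) : ∑ μ ∈ univ.filter fun μ => α μ = β ν, coupling α p q (μ, ν) = q ν := by
  calc ∑ μ ∈ univ.filter fun μ => α μ = β ν, coupling α p q (μ, ν)
      = ∑ μ ∈ univ.filter fun μ => α μ = β ν, p μ * q ν / fiberSum α p (β ν) :=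
        sum_congr rfl fun μ hμ => by rw [coupling, (mem_filter.1 hμ).2]
    _ = q ν := by
        rw [← sum_div, ← sum_mul, mul_comm]
        change q ν * fiberSum α p (β ν) / _ = _
        rw [hpq]
        exact mul_div_cancel_of_imp (eq_zero_of_fiberSum_eq_zero hq)

lemma sum_coupling_mul_left (hp : ∀ μ, 0 ≤ p μ) (hpq : ∀ k, fiberSum α p k = fiberSum β q k)
    (g : A → ℝ) : ∑ x ∈ fiberProd α β, coupling α p q x * g x.1 = ∑ μ, p μ * g μ := by
  rw [sum_fiberProd_eq_sum_left]
  simp_rw [← sum_mul, sum_coupling_fiber_left hp hpq]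

lemma sum_coupling_mul_right (hq : ∀ ν, 0 ≤ q ν) (hpq : ∀ k, fiberSum α p k = fiberSum β q k)
    (g : B → ℝ) : ∑ x ∈ fiberProd α β, coupling α p q x * g x.2 = ∑ ν, q ν * g ν := by
  rw [sum_fiberProd_eq_sum_right]
  simp_rw [← sum_mul, sum_coupling_fiber_right hq hpq]

variable [Fintype C] {D : A → ℝ} {E : B → ℝ} {F : C → ℝ}

theorem fluxObjective_eq_sum_coupling (hD : ∀ μ, D μ ≠ 0) (hE : ∀ ν, E ν ≠ 0) (hF : ∀ k, F k ≠ 0)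
    (hp : ∀ μ, 0 ≤ p μ) (hq : ∀ ν, 0 ≤ q ν) (hpq : ∀ k, fiberSum α p k = fiberSum β q k) :
    fluxObjective α D E F p q = ∑ x ∈ fiberProd α β,
      coupling α p q x * (log (D x.1 * E x.2 / F (α x.1)) - log (coupling α p q x)) := by
  rw [fluxObjective, sum_fiberSum_mul, ← sum_coupling_mul_left hp hpq,
    ← sum_coupling_mul_left hp hpq, ← sum_coupling_mul_right hq hpq, ← sum_add_distrib,
    ← sum_sub_distrib]
  refine sum_congr rfl fun x _ => ?_
  rw [coupling, mul_log_mul_div_sub_log_mul_div (hD _) (hE _) (hF _)]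
  ring

theorem fluxObjective_le_log (hD : ∀ μ, 0 < D μ) (hE : ∀ ν, 0 < E ν) (hF : ∀ k, 0 < F k)
    (hpq : FeasiblePair α β p q) :
    fluxObjective α D E F p q ≤ log (∑ x ∈ fiberProd α β, D x.1 * E x.2 / F (α x.1)) := by
  obtain ⟨hp, hp1, hq, -, hfib⟩ := hpq
  rw [fluxObjective_eq_sum_coupling (fun μ => (hD μ).ne') (fun ν => (hE ν).ne')
    (fun k => (hF k).ne') hp hq hfib]
  refine sum_mul_log_sub_log_le_log_sum _ (fun x _ => coupling_nonneg hp hq x) ?_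
    (fun x _ => div_pos (mul_pos (hD _) (hE _)) (hF _))
  simpa [hp1] using sum_coupling_mul_left hp hfib 1

theorem exists_feasiblePair_fluxObjective_eq_log (hD : ∀ μ, 0 < D μ) (hE : ∀ ν, 0 < E ν)
    (hF : ∀ k, 0 < F k) (hmatch : ∃ μ ν, α μ = β ν) :
    ∃ p q, FeasiblePair α β p q ∧
      fluxObjective α D E F p q = log (∑ x ∈ fiberProd α β, D x.1 * E x.2 / F (α x.1)) := by
  obtain ⟨μ₀, ν₀, hμν⟩ := hmatch
  set Z := ∑ x ∈ fiberProd α β, D x.1 * E x.2 / F (α x.1)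
  have hZpos : 0 < Z :=
    sum_pos (fun x _ => div_pos (mul_pos (hD _) (hE _)) (hF _)) ⟨(μ₀, ν₀), by simp [fiberProd, hμν]⟩
  -- the marginals of the Gibbs coupling `x ↦ D x.1 * E x.2 / F (α x.1) / Z`
  set p : A → ℝ := fun μ => D μ * (fiberSum β E (α μ) / (F (α μ) * Z))
  set q : B → ℝ := fun ν => E ν * (fiberSum α D (β ν) / (F (β ν) * Z))
  have hp : ∀ μ, 0 ≤ p μ := fun μ => mul_nonneg (hD μ).le <|
    div_nonneg (fiberSum_nonneg (fun ν => (hE ν).le) _) (mul_pos (hF _) hZpos).le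
  have hq : ∀ ν, 0 ≤ q ν := fun ν => mul_nonneg (hE ν).le <|
    div_nonneg (fiberSum_nonneg (fun μ => (hD μ).le) _) (mul_pos (hF _) hZpos).le
  have hfibp : ∀ k, fiberSum α p k = fiberSum α D k * (fiberSum β E k / (F k * Z)) :=
    fiberSum_mul_comp α D fun k => fiberSum β E k / (F k * Z)
  have hfibq : ∀ k, fiberSum β q k = fiberSum β E k * (fiberSum α D k / (F k * Z)) :=
    fiberSum_mul_comp β E fun k => fiberSum α D k / (F k * Z)
  have hpq : ∀ k, fiberSum α p k = fiberSum β q k := fun k => by rw [hfibp, hfibq]; ring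
  have hp1 : ∑ μ, p μ = 1 := by
    have hterm : ∀ k, fiberSum α p k = fiberSum α D k * (fiberSum β E k / F k) / Z := fun k => by
      rw [hfibp, mul_div_assoc', mul_div_assoc', div_div]
    rw [← sum_fiberSum α, sum_congr rfl fun k _ => hterm k, ← sum_div, ← sum_fiberProd_mul_div]
    exact div_self hZpos.ne'
  have hq1 : ∑ ν, q ν = 1 := by
    rw [← sum_fiberSum β, ← sum_congr rfl fun k _ => hpq k, sum_fiberSum, hp1]
  have hcoupling : ∀ x ∈ fiberProd α β, coupling α p q x = D x.1 * E x.2 / F (α x.1) / Z := by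
    intro x hx
    have hx : α x.1 = β x.2 := (mem_filter.1 hx).2
    have hW := fiberSum_pos (α := α) hD x.1
    have hV := fiberSum_pos (α := β) hE x.2
    have hFx := hF (α x.1)
    rw [← hx] at hV
    simp only [coupling, hfibp, p, q, ← hx]
    field_simp
  refine ⟨p, q, ⟨hp, hp1, hq, hq1, hpq⟩, ?_⟩
  rw [fluxObjective_eq_sum_coupling (fun μ => (hD μ).ne') (fun ν => (hE ν).ne')
    (fun k => (hF k).ne') hp hq hpq, sum_congr rfl fun x hx => by rw [hcoupling x hx]]
  exact sum_div_mul_log_sub_log_div _ fun x _ => (div_pos (mul_pos (hD _) (hE _)) (hF _)).ne'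

end

theorem stmt6_general {A B C : Type*} [Fintype A] [Fintype B] [Fintype C] [DecidableEq C]
    (α : A → C) (β : B → C) (d : A → ℝ) (e : B → ℝ) (f : C → ℝ)
    (hd : ∀ μ, 0 < d μ) (he : ∀ ν, 0 < e ν) (hf : ∀ k, 0 < f k)
    (hmatch : ∃ (μ₀ : A) (ν₀ : B), α μ₀ = β ν₀)
    (Feasible : (A → ℝ) → (B → ℝ) → Prop)
    (hFeasible : ∀ p q, Feasible p q ↔
      (∀ μ, 0 ≤ p μ) ∧ (∑ μ, p μ = 1) ∧ (∀ ν, 0 ≤ q ν) ∧ (∑ ν, q ν = 1) ∧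
      ∀ k : C, (∑ μ ∈ Finset.univ.filter fun μ => α μ = k, p μ)
             = (∑ ν ∈ Finset.univ.filter fun ν => β ν = k, q ν))
    (Φ : (A → ℝ) → (B → ℝ) → ℝ)
    (hΦ : ∀ p q, Φ p q =
      (∑ μ, p μ * (Real.log ((d μ) ^ 2) - Real.log (p μ)))
      + (∑ ν, q ν * (Real.log ((e ν) ^ 2) - Real.log (q ν)))
      - (∑ k, (∑ μ ∈ Finset.univ.filter fun μ => α μ = k, p μ)
              * (Real.log ((f k) ^ 2)
                  - Real.log (∑ μ ∈ Finset.univ.filter fun μ => α μ = k, p μ)))) :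
    (∃ p q, Feasible p q ∧ Φ p q =
        Real.log (∑ x ∈ Finset.univ.filter fun x : A × B => α x.1 = β x.2,
          (d x.1) ^ 2 * (e x.2) ^ 2 / (f (α x.1)) ^ 2)) ∧
    (∀ p q, Feasible p q → Φ p q ≤
        Real.log (∑ x ∈ Finset.univ.filter fun x : A × B => α x.1 = β x.2,
          (d x.1) ^ 2 * (e x.2) ^ 2 / (f (α x.1)) ^ 2)) := by
  have hΦ' : ∀ p q, Φ p q = fluxObjective α (d · ^ 2) (e · ^ 2) (f · ^ 2) p q := hΦ
  have hFeasible' : ∀ p q, Feasible p q ↔ FeasiblePair α β p q := hFeasible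
  have hD : ∀ μ, 0 < d μ ^ 2 := fun μ => pow_pos (hd μ) 2
  have hE : ∀ ν, 0 < e ν ^ 2 := fun ν => pow_pos (he ν) 2
  have hF : ∀ k, 0 < f k ^ 2 := fun k => pow_pos (hf k) 2
  refine ⟨?_, fun p q hpq => ?_⟩
  · obtain ⟨p, q, hpq, hval⟩ := exists_feasiblePair_fluxObjective_eq_log hD hE hF hmatch
    exact ⟨p, q, (hFeasible' p q).2 hpq, (hΦ' p q).trans hval⟩
  · rw [hΦ']
    exact fluxObjective_le_log hD hE hF ((hFeasible' p q).1 hpq)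

theorem stmt6 {A B C : Type*} [Fintype A] [Fintype B] [Fintype C]
    [Nonempty A] [Nonempty B] [DecidableEq C]
    (α : A → C) (β : B → C) (d : A → ℝ) (e : B → ℝ) (f : C → ℝ)
    (hd : ∀ μ, 0 < d μ) (he : ∀ ν, 0 < e ν) (hf : ∀ k, 0 < f k)
    (hmatch : ∃ (μ₀ : A) (ν₀ : B), α μ₀ = β ν₀)
    (Feasible : (A → ℝ) → (B → ℝ) → Prop)
    (hFeasible : ∀ p q, Feasible p q ↔
      (∀ μ, 0 ≤ p μ) ∧ (∑ μ, p μ = 1) ∧ (∀ ν, 0 ≤ q ν) ∧ (∑ ν, q ν = 1) ∧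
      ∀ k : C, (∑ μ ∈ Finset.univ.filter fun μ => α μ = k, p μ)
             = (∑ ν ∈ Finset.univ.filter fun ν => β ν = k, q ν))
    (Φ : (A → ℝ) → (B → ℝ) → ℝ)
    (hΦ : ∀ p q, Φ p q =
      (∑ μ, p μ * (Real.log ((d μ) ^ 2) - Real.log (p μ)))
      + (∑ ν, q ν * (Real.log ((e ν) ^ 2) - Real.log (q ν)))
      - (∑ k, (∑ μ ∈ Finset.univ.filter fun μ => α μ = k, p μ)
              * (Real.log ((f k) ^ 2)
                  - Real.log (∑ μ ∈ Finset.univ.filter fun μ => α μ = k, p μ)))) :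
    (∃ p q, Feasible p q ∧ Φ p q =
        Real.log (∑ x ∈ Finset.univ.filter fun x : A × B => α x.1 = β x.2,
          (d x.1) ^ 2 * (e x.2) ^ 2 / (f (α x.1)) ^ 2)) ∧
    (∀ p q, Feasible p q → Φ p q ≤
        Real.log (∑ x ∈ Finset.univ.filter fun x : A × B => α x.1 = β x.2,
          (d x.1) ^ 2 * (e x.2) ^ 2 / (f (α x.1)) ^ 2)) :=
  stmt6_general α β d e f hd he hf hmatch Feasible hFeasible Φ hΦ
end
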